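/- The complete graph K_n is ℤ₃-connected if and only if n = 1 or n ≥ 5. -/

import Mathlib

/-- A finite loopless multigraph: each edge has an ordered pair of distinct endpoints
(the ordering is immaterial; it is only used to describe orientations). -/
structure Multigraph : Type 1 where
  V : Type
  fintypeV : Fintype V
  decEqV : DecidableEq V
  E : Type
  fintypeE : Fintype E
  decEqE : DecidableEq E
  ends : E → V × V
  loopless : ∀ e, (ends e).1 ≠ (ends e).2

attribute [instance] Multigraph.fintypeV Multigraph.decEqV Multigraph.fintypeE Multigraph.decEqE

namespace Multigraph

variable (G : Multigraph)

/-- Tail of an edge under an orientation `D` (`true` = directed from first to second end). -/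
def tail (D : G.E → Bool) (e : G.E) : G.V := if D e then (G.ends e).1 else (G.ends e).2

/-- Head of an edge under an orientation `D`. -/
def head (D : G.E → Bool) (e : G.E) : G.V := if D e then (G.ends e).2 else (G.ends e).1

/-- Out-degree of `v` under orientation `D`. -/
def outDeg (D : G.E → Bool) (v : G.V) : ℕ := (Finset.univ.filter fun e => G.tail D e = v).card

/-- In-degree of `v` under orientation `D`. -/
def inDeg (D : G.E → Bool) (v : G.V) : ℕ := (Finset.univ.filter fun e => G.head D e = v).card

/-- A modulo 3-orientation. -/
def HasMod3Orientation : Prop :=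
  ∃ D : G.E → Bool, ∀ v : G.V, ((G.outDeg D v : ZMod 3) = (G.inDeg D v : ZMod 3))

/-- A nowhere-zero 3-flow. -/
def HasNowhereZero3Flow : Prop :=
  ∃ (D : G.E → Bool) (f : G.E → ℤ),
    (∀ e, 1 ≤ |f e| ∧ |f e| ≤ 2) ∧
    (∀ v : G.V,
      (∑ e : G.E, if G.tail D e = v then f e else 0) =
      (∑ e : G.E, if G.head D e = v then f e else 0))

/-- `ℤ₃`-connectivity. -/
def Z3Connected : Prop :=
  ∀ b : G.V → ZMod 3, (∑ v : G.V, b v) = 0 →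
    ∃ D : G.E → Bool, ∀ v : G.V, (G.outDeg D v : ZMod 3) - (G.inDeg D v : ZMod 3) = b v

/-- Degree of a vertex. -/
def degree (v : G.V) : ℕ :=
  (Finset.univ.filter fun e => (G.ends e).1 = v ∨ (G.ends e).2 = v).card

/-- Minimum degree `δ(G)`. -/
noncomputable def minDegree : ℕ := sInf (Set.range G.degree)

/-- The edge cut `∂_G(S)`. -/
def cut (S : Finset G.V) : Finset G.E :=
  Finset.univ.filter fun e =>
    ((G.ends e).1 ∈ S ∧ (G.ends e).2 ∉ S) ∨ ((G.ends e).2 ∈ S ∧ (G.ends e).1 ∉ S)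

def Adjacent (u v : G.V) : Prop :=
  ∃ e : G.E, G.ends e = (u, v) ∨ G.ends e = (v, u)

def IsIndepSet (S : Finset G.V) : Prop :=
  ∀ u ∈ S, ∀ v ∈ S, u ≠ v → ¬ G.Adjacent u v

/-- The independence number `α(G)`. -/
noncomputable def indepNum : ℕ := sSup {n : ℕ | ∃ S : Finset G.V, G.IsIndepSet S ∧ S.card = n}

def FiveEdgeConnected : Prop :=
  ∀ S : Finset G.V, S.Nonempty → S ≠ Finset.univ → 5 ≤ (G.cut S).card

/-- Every odd edge cut has at least 5 edges. -/
def Odd5EdgeConnected : Prop :=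
  ∀ S : Finset G.V, Odd (G.cut S).card → 5 ≤ (G.cut S).card

/-- `G` contains `K₄` as a subgraph. -/
def ContainsK4 : Prop :=
  ∃ a b c d : G.V, a ≠ b ∧ a ≠ c ∧ a ≠ d ∧ b ≠ c ∧ b ≠ d ∧ c ≠ d ∧
    G.Adjacent a b ∧ G.Adjacent a c ∧ G.Adjacent a d ∧
    G.Adjacent b c ∧ G.Adjacent b d ∧ G.Adjacent c d

/-- The neighbourhood `N(X)`: vertices outside `X` with a neighbour in `X`. -/
noncomputable def neighborFinset (X : Finset G.V) : Finset G.V := by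
  classical
  exact Finset.univ.filter fun y => y ∉ X ∧ ∃ x ∈ X, G.Adjacent x y

/-- Induced subgraph on a vertex set `S`. -/
def induce (S : Finset G.V) : Multigraph where
  V := {v // v ∈ S}
  fintypeV := inferInstance
  decEqV := inferInstance
  E := {e : G.E // (G.ends e).1 ∈ S ∧ (G.ends e).2 ∈ S}
  fintypeE := inferInstance
  decEqE := inferInstance
  ends := fun e => (⟨(G.ends e.1).1, e.2.1⟩, ⟨(G.ends e.1).2, e.2.2⟩)
  loopless := fun e h => G.loopless e.1 (congrArg Subtype.val h)

/-- The relation identifying the two ends of each edge in `F`. -/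
def contractRel (F : Set G.E) (x y : G.V) : Prop :=
  ∃ e ∈ F, G.ends e = (x, y) ∨ G.ends e = (y, x)

/-- Contraction of a set `F` of edges: identify endpoints of edges of `F`
(via the equivalence closure), delete the edges of `F` and all resulting loops. -/
noncomputable def contractEdges (F : Set G.E) : Multigraph := by
  classical
  exact
    { V := Quot (G.contractRel F)
      fintypeV := Fintype.ofSurjective (Quot.mk _) (fun q => Quot.inductionOn q fun a => ⟨a, rfl⟩)
      decEqV := Classical.decEq _
      E := {e : G.E // e ∉ F ∧
            Quot.mk (G.contractRel F) (G.ends e).1 ≠ Quot.mk (G.contractRel F) (G.ends e).2}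
      fintypeE := Subtype.fintype _
      decEqE := Classical.decEq _
      ends := fun e => (Quot.mk _ (G.ends e.1).1, Quot.mk _ (G.ends e.1).2)
      loopless := fun e => e.2.2 }

end Multigraph

/-- A subgraph of a multigraph. -/
structure Multigraph.Subgraph (G : Multigraph) where
  verts : Finset G.V
  edges : Finset G.E
  ends_mem : ∀ e ∈ edges, (G.ends e).1 ∈ verts ∧ (G.ends e).2 ∈ verts

namespace Multigraph

/-- A subgraph as a multigraph in its own right. -/
def Subgraph.toMultigraph {G : Multigraph} (H : G.Subgraph) : Multigraph where
  V := {v // v ∈ H.verts}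
  fintypeV := inferInstance
  decEqV := inferInstance
  E := {e // e ∈ H.edges}
  fintypeE := inferInstance
  decEqE := inferInstance
  ends := fun e => (⟨(G.ends e.1).1, (H.ends_mem e.1 e.2).1⟩, ⟨(G.ends e.1).2, (H.ends_mem e.1 e.2).2⟩)
  loopless := fun e h => G.loopless e.1 (congrArg Subtype.val h)

/-- `G` is `⟨ℤ₃⟩`-reduced: it has no `ℤ₃`-connected subgraph with at least two vertices. -/
def Z3Reduced (G : Multigraph) : Prop :=
  ∀ H : G.Subgraph, H.toMultigraph.Z3Connected → H.verts.card ≤ 1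

/-- The contraction `G/H` of a subgraph. -/
noncomputable def contractSubgraph (G : Multigraph) (H : G.Subgraph) : Multigraph :=
  G.contractEdges {e | e ∈ H.edges}

/-- The `⟨ℤ₃⟩`-reduction of `G`: contract (the edges of) all maximal `ℤ₃`-connected
subgraphs of `G`. -/
noncomputable def reduction (G : Multigraph) : Multigraph :=
  G.contractEdges {e | ∃ H : G.Subgraph, H.toMultigraph.Z3Connected ∧ e ∈ H.edges}

end Multigraph

/-- `r(n)`: the maximum number of edges of a `⟨ℤ₃⟩`-reduced graph on `n` vertices. -/
noncomputable def edgeMaxReduced (n : ℕ) : ℕ :=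
  sSup {m : ℕ | ∃ G : Multigraph, G.Z3Reduced ∧ Fintype.card G.V = n ∧ Fintype.card G.E = m}

/-- The complete graph `K_n`. -/
def completeK (n : ℕ) : Multigraph where
  V := Fin n
  fintypeV := inferInstance
  decEqV := inferInstance
  E := {p : Fin n × Fin n // p.1 < p.2}
  fintypeE := inferInstance
  decEqE := inferInstance
  ends := fun p => p.1
  loopless := fun p => Fin.ne_of_lt p.2

private theorem fin_succ_ne {n : ℕ} (hn : 2 ≤ n) (i : Fin n)
    (hv : (i : ℕ) = ((i : ℕ) + 1) % n) : False := by
  have hi := i.isLt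
  by_cases hlt : (i : ℕ) + 1 < n
  · rw [Nat.mod_eq_of_lt hlt] at hv; omega
  · have he : (i : ℕ) + 1 = n := by omega
    rw [he, Nat.mod_self] at hv; omega

/-- The cycle `C_n` (for `n ≥ 2`); `C_2` is a digon. -/
def cycleGraph (n : ℕ) (hn : 2 ≤ n) : Multigraph where
  V := Fin n
  fintypeV := inferInstance
  decEqV := inferInstance
  E := Fin n
  fintypeE := inferInstance
  decEqE := inferInstance
  ends := fun i => (i, ⟨((i : ℕ) + 1) % n, Nat.mod_lt _ (by omega)⟩)
  loopless := fun i h => fin_succ_ne hn i (congrArg Fin.val h)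

/-- The wheel `W_n` (for `n ≥ 2`): an `n`-cycle on `some 0, …, some (n-1)` together
with a center `none` joined to every vertex of the cycle. -/
def wheelGraph (n : ℕ) (hn : 2 ≤ n) : Multigraph where
  V := Option (Fin n)
  fintypeV := inferInstance
  decEqV := inferInstance
  E := Fin n ⊕ Fin n
  fintypeE := inferInstance
  decEqE := inferInstance
  ends := fun e => match e with
    | .inl i => (some i, some ⟨((i : ℕ) + 1) % n, Nat.mod_lt _ (by omega)⟩)
    | .inr i => (none, some i)
  loopless := by
    rintro (i | i) h
    · exact fin_succ_ne hn i (congrArg Fin.val (Option.some_injective _ h))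
    · have h' : (none : Option (Fin n)) = some i := h
      cases h'

/-!
Two orientation-lifting facts do the work. A vertex `w` of degree `d ≥ 2` can be given any net
out-degree `β` mod 3: send `k` of its edges out and `d - k` in, where `2k - d = β` has a solution
`k ∈ {0, 1, 2}`. If moreover `G - w` is `ℤ₃`-connected, fix such an orientation of the edges at `w`,
subtract their contributions from `b` on the other vertices (the result still sums to zero, since
every edge contributes `+1` and `-1`), and orient `G - w` for that boundary. As `K_{n+1}` is `K_n`
plus a vertex of degree `n`, `ℤ₃`-connectivity propagates from `K_5` upwards; `K_1`, `K_5` and the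
failures of `K_2`, `K_3`, `K_4` are finite checks.
-/

open Finset

namespace Multigraph

variable (G : Multigraph)

def netOutDeg (D : G.E → Bool) (v : G.V) : ZMod 3 := G.outDeg D v - G.inDeg D v

theorem z3Connected_iff : G.Z3Connected ↔
    ∀ b : G.V → ZMod 3, ∑ v, b v = 0 → ∃ D : G.E → Bool, ∀ v, G.netOutDeg D v = b v :=
  Iff.rfl

def signedIncidence (D : G.E → Bool) (e : G.E) (v : G.V) : ZMod 3 :=
  (if G.tail D e = v then 1 else 0) - (if G.head D e = v then 1 else 0)

variable {G}

theorem netOutDeg_eq_sum (D : G.E → Bool) (v : G.V) :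
    G.netOutDeg D v = ∑ e, G.signedIncidence D e v := by
  simp only [netOutDeg, signedIncidence, outDeg, inDeg, card_filter, Nat.cast_sum, Nat.cast_ite,
    Nat.cast_one, Nat.cast_zero, sum_sub_distrib]

theorem sum_signedIncidence (D : G.E → Bool) (e : G.E) : ∑ v, G.signedIncidence D e v = 0 := by
  simp [signedIncidence, sum_sub_distrib]

theorem signedIncidence_congr {D D' : G.E → Bool} {e : G.E} (h : D e = D' e) (v : G.V) :
    G.signedIncidence D e v = G.signedIncidence D' e v := by
  unfold signedIncidence tail head
  rw [h]

theorem signedIncidence_eq_zero {v : G.V} {e : G.E} (h₁ : (G.ends e).1 ≠ v) (h₂ : (G.ends e).2 ≠ v)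
    (D : G.E → Bool) : G.signedIncidence D e v = 0 := by
  unfold signedIncidence tail head
  split <;> simp [*]

section Induce

variable {S : Finset G.V} (D : G.E → Bool)

theorem induce_tail (e : (G.induce S).E) :
    ((G.induce S).tail (fun e => D e.1) e).1 = G.tail D e.1 := by
  unfold tail; split <;> rfl

theorem induce_head (e : (G.induce S).E) :
    ((G.induce S).head (fun e => D e.1) e).1 = G.head D e.1 := by
  unfold head; split <;> rfl

theorem induce_signedIncidence (e : (G.induce S).E) (u : (G.induce S).V) :
    (G.induce S).signedIncidence (fun e => D e.1) e u = G.signedIncidence D e.1 u.1 := by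
  unfold signedIncidence
  rw [← induce_tail, ← induce_head]
  congr 1 <;> exact if_congr Subtype.ext_iff rfl rfl

theorem netOutDeg_eq_induce_add (u : (G.induce S).V) :
    G.netOutDeg D u.1 = (G.induce S).netOutDeg (fun e => D e.1) u +
      ∑ e ∈ univ.filter (fun e => ¬((G.ends e).1 ∈ S ∧ (G.ends e).2 ∈ S)),
        G.signedIncidence D e u.1 := by
  rw [netOutDeg_eq_sum, netOutDeg_eq_sum, ← sum_filter_add_sum_filter_not univ
    (fun e => (G.ends e).1 ∈ S ∧ (G.ends e).2 ∈ S)]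
  congr 1
  rw [sum_subtype (p := fun e => (G.ends e).1 ∈ S ∧ (G.ends e).2 ∈ S) _ (by simp)]
  exact sum_congr rfl fun e _ => (induce_signedIncidence D e u).symm

theorem netOutDeg_eq_sum_filter_not {w : G.V} (hw : w ∉ S) :
    G.netOutDeg D w = ∑ e ∈ univ.filter (fun e => ¬((G.ends e).1 ∈ S ∧ (G.ends e).2 ∈ S)),
      G.signedIncidence D e w := by
  rw [netOutDeg_eq_sum, ← sum_filter_add_sum_filter_not univ
    (fun e => (G.ends e).1 ∈ S ∧ (G.ends e).2 ∈ S), add_eq_right]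
  refine sum_eq_zero fun e he => signedIncidence_eq_zero ?_ ?_ D <;>
    rintro rfl <;> simp_all

end Induce

theorem exists_netOutDeg_eq {w : G.V} (hw : 2 ≤ G.degree w) (β : ZMod 3) :
    ∃ D : G.E → Bool, G.netOutDeg D w = β := by
  set F := univ.filter fun e => (G.ends e).1 = w ∨ (G.ends e).2 = w
  have hF : G.degree w = F.card := rfl
  -- `k` edges out of `w` and `deg w - k` into it give `2k - deg w`, and `2` is a unit mod `3`
  set k := ((β + F.card) * 2).val
  have hk : (k : ZMod 3) = (β + F.card) * 2 := ZMod.natCast_zmod_val _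
  obtain ⟨A, hAF, hA⟩ := exists_subset_card_eq (s := F) (n := k)
    (by have := ZMod.val_lt ((β + (F.card : ZMod 3)) * 2); omega)
  let D : G.E → Bool := fun e => if e ∈ A then (G.ends e).1 = w else (G.ends e).2 = w
  have hsign : ∀ e, G.signedIncidence D e w =
      2 * (if e ∈ A then 1 else 0) - (if e ∈ F then 1 else 0) := by
    intro e
    have hAF' := @hAF e
    have hloop : ¬((G.ends e).1 = w ∧ (G.ends e).2 = w) := fun h =>
      G.loopless e (h.1.trans h.2.symm)
    by_cases h₁ : (G.ends e).1 = w <;> by_cases h₂ : (G.ends e).2 = w <;> by_cases heA : e ∈ A <;>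
      simp_all [signedIncidence, tail, head, D, F] <;> norm_num
  refine ⟨D, ?_⟩
  rw [netOutDeg_eq_sum, sum_congr rfl fun e _ => hsign e, sum_sub_distrib, ← mul_sum, sum_boole,
    sum_boole, filter_mem_eq_inter, filter_mem_eq_inter, univ_inter, univ_inter, hA, hk]
  have h3 : (3 : ZMod 3) = 0 := rfl
  linear_combination (β + F.card) * h3

theorem z3Connected_of_induce_erase {w : G.V} (hw : 2 ≤ G.degree w)
    (h : (G.induce (univ.erase w)).Z3Connected) : G.Z3Connected := by
  rw [z3Connected_iff] at h ⊢
  intro b hb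
  set S := univ.erase w
  set X := univ.filter fun e => ¬((G.ends e).1 ∈ S ∧ (G.ends e).2 ∈ S)
  obtain ⟨D₀, hD₀⟩ := exists_netOutDeg_eq hw (b w)
  set c : G.V → ZMod 3 := fun u => ∑ e ∈ X, G.signedIncidence D₀ e u
  have hcw : c w = b w := by rw [← hD₀, netOutDeg_eq_sum_filter_not D₀ (notMem_erase w univ)]
  have hc : ∑ u, c u = 0 := by
    rw [sum_comm]
    exact sum_eq_zero fun e _ => sum_signedIncidence D₀ e
  obtain ⟨D', hD'⟩ := h (fun u => b u.1 - c u.1) (by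
    refine (sum_coe_sort S fun u => b u - c u).trans ?_
    rw [sum_sub_distrib, sum_erase_eq_sub (mem_univ w),
      sum_erase_eq_sub (mem_univ w), hb, hc, hcw, sub_self])
  let D : G.E → Bool := fun e =>
    if he : (G.ends e).1 ∈ S ∧ (G.ends e).2 ∈ S then D' ⟨e, he⟩ else D₀ e
  have hX : ∀ v, ∑ e ∈ X, G.signedIncidence D e v = c v := fun v =>
    sum_congr rfl fun e he => signedIncidence_congr (dif_neg (mem_filter.1 he).2) v
  refine ⟨D, fun v => ?_⟩
  by_cases hv : v = w
  · subst hv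
    rw [netOutDeg_eq_sum_filter_not D (notMem_erase v univ), hX, hcw]
  · have hvS : v ∈ S := mem_erase.2 ⟨hv, mem_univ v⟩
    have hDD' : (fun e : (G.induce S).E => D e.1) = D' := funext fun e => dif_pos e.2
    rw [netOutDeg_eq_induce_add D (⟨v, hvS⟩ : (G.induce S).V), hX, hDD']
    exact (congrArg (· + c v) (hD' ⟨v, hvS⟩)).trans (sub_add_cancel _ _)

structure Iso (G H : Multigraph) where
  vertEquiv : G.V ≃ H.V
  edgeEquiv : G.E ≃ H.E
  ends_edgeEquiv : ∀ e, H.ends (edgeEquiv e) = Prod.map vertEquiv vertEquiv (G.ends e)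

namespace Iso

variable {H : Multigraph} (φ : G.Iso H) (D : G.E → Bool)

theorem tail_edgeEquiv (e : G.E) :
    H.tail (D ∘ φ.edgeEquiv.symm) (φ.edgeEquiv e) = φ.vertEquiv (G.tail D e) := by
  simp only [tail, Function.comp_apply, Equiv.symm_apply_apply, φ.ends_edgeEquiv, Prod.map_fst,
    Prod.map_snd, apply_ite φ.vertEquiv]

theorem head_edgeEquiv (e : G.E) :
    H.head (D ∘ φ.edgeEquiv.symm) (φ.edgeEquiv e) = φ.vertEquiv (G.head D e) := by
  simp only [head, Function.comp_apply, Equiv.symm_apply_apply, φ.ends_edgeEquiv, Prod.map_fst,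
    Prod.map_snd, apply_ite φ.vertEquiv]

theorem netOutDeg_vertEquiv (v : G.V) :
    H.netOutDeg (D ∘ φ.edgeEquiv.symm) (φ.vertEquiv v) = G.netOutDeg D v := by
  rw [netOutDeg_eq_sum, netOutDeg_eq_sum, ← φ.edgeEquiv.sum_comp]
  simp only [signedIncidence, tail_edgeEquiv, head_edgeEquiv, φ.vertEquiv.apply_eq_iff_eq]

end Iso

theorem Iso.z3Connected {H : Multigraph} (φ : G.Iso H) (hG : G.Z3Connected) : H.Z3Connected := by
  rw [z3Connected_iff] at hG ⊢
  intro b hb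
  obtain ⟨D, hD⟩ := hG (b ∘ φ.vertEquiv) (by rw [← hb]; exact φ.vertEquiv.sum_comp b)
  refine ⟨D ∘ φ.edgeEquiv.symm, fun v => ?_⟩
  rw [← φ.vertEquiv.apply_symm_apply v, netOutDeg_vertEquiv, hD, Function.comp_apply]

end Multigraph

open Multigraph

def completeKIsoInduceEraseLast (n : ℕ) :
    (completeK n).Iso ((completeK (n + 1)).induce (univ.erase (Fin.last n))) where
  vertEquiv :=
    { toFun := fun v => ⟨Fin.castSucc v, mem_erase.2 ⟨Fin.castSucc_ne_last v, mem_univ _⟩⟩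
      invFun := fun v => Fin.castPred v.1 (ne_of_mem_erase v.2)
      left_inv := fun _ => Fin.castPred_castSucc
      right_inv := fun _ => Subtype.ext (Fin.castSucc_castPred _ _) }
  edgeEquiv :=
    { toFun := fun p =>
        ⟨⟨(Fin.castSucc p.1.1, Fin.castSucc p.1.2), Fin.castSucc_lt_castSucc_iff.2 p.2⟩,
          mem_erase.2 ⟨Fin.castSucc_ne_last _, mem_univ _⟩,
          mem_erase.2 ⟨Fin.castSucc_ne_last _, mem_univ _⟩⟩
      invFun := fun e => ⟨(Fin.castPred e.1.1.1 (ne_of_mem_erase e.2.1),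
        Fin.castPred e.1.1.2 (ne_of_mem_erase e.2.2)), Fin.lt_def.2 (Fin.lt_def.1 e.1.2)⟩
      left_inv := fun _ => rfl
      right_inv := fun _ => rfl }
  ends_edgeEquiv := fun _ => rfl

theorem two_le_degree_completeK_last {n : ℕ} (hn : 2 ≤ n) :
    2 ≤ (completeK (n + 1)).degree (Fin.last n) := by
  change 1 < (univ.filter fun e : {p : Fin (n + 1) × Fin (n + 1) // p.1 < p.2} =>
    e.1.1 = Fin.last n ∨ e.1.2 = Fin.last n).card
  let i₀ : Fin n := ⟨0, by omega⟩
  let i₁ : Fin n := ⟨1, by omega⟩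
  exact one_lt_card.2 ⟨⟨(i₀.castSucc, Fin.last n), Fin.castSucc_lt_last i₀⟩, by simp,
    ⟨(i₁.castSucc, Fin.last n), Fin.castSucc_lt_last i₁⟩, by simp, by simp [i₀, i₁]⟩

theorem z3Connected_completeK_succ {n : ℕ} (hn : 2 ≤ n) (h : (completeK n).Z3Connected) :
    (completeK (n + 1)).Z3Connected :=
  z3Connected_of_induce_erase (two_le_degree_completeK_last hn)
    ((completeKIsoInduceEraseLast n).z3Connected h)

theorem z3Connected_completeK_one : (completeK 1).Z3Connected := by
  unfold Z3Connected completeK; decide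

theorem not_z3Connected_completeK_two : ¬(completeK 2).Z3Connected := by
  unfold Z3Connected completeK; decide

theorem not_z3Connected_completeK_three : ¬(completeK 3).Z3Connected := by
  unfold Z3Connected completeK; decide

set_option maxRecDepth 4000 in
theorem not_z3Connected_completeK_four : ¬(completeK 4).Z3Connected := by
  unfold Z3Connected completeK; decide

set_option maxHeartbeats 4000000 in
set_option maxRecDepth 20000 in
theorem z3Connected_completeK_five : (completeK 5).Z3Connected := by
  unfold Z3Connected completeK; decide

theorem z3Connected_completeK_of_five_le {n : ℕ} (hn : 5 ≤ n) : (completeK n).Z3Connected := by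
  induction n, hn using Nat.le_induction with
  | base => exact z3Connected_completeK_five
  | succ n hn ih => exact z3Connected_completeK_succ (by omega) ih

/-- The complete graph `K_n` is `ℤ₃`-connected iff `n = 1` or `n ≥ 5`. -/
theorem completeK_z3Connected_iff (n : ℕ) (hn : 1 ≤ n) :
    (completeK n).Z3Connected ↔ (n = 1 ∨ 5 ≤ n) := by
  refine ⟨fun h => ?_, ?_⟩
  · by_contra! hn'
    obtain ⟨hn1, hn5⟩ := hn'
    interval_cases n
    exacts [hn1 rfl, not_z3Connected_completeK_two h, not_z3Connected_completeK_three h,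
      not_z3Connected_completeK_four h]
  · rintro (rfl | hn5)
    · exact z3Connected_completeK_one
    · exact z3Connected_completeK_of_five_le hn5
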